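/- arXiv:1808.09177 — 7 statements merged into one kernel-verified Lean document; each statement's English description precedes it below -/
import Mathlib

section
/- For any collection of n unit-norm vectors b_1,...,b_n in C^d with n ≥ d, the sum over all pairs (i,j) of |⟨b_i, b_j⟩|² is at least n²/d. -/
/-!
Let `A` be the matrix of coordinates of the vectors `b i` in an orthonormal basis, so that the
Gram matrix is `G = A Aᴴ` and the frame operator is the `d × d` matrix `F = Aᴴ A`. Cycling the
trace gives `∑ |G i j|² = tr (G²) = tr (F²) = ∑ |F k l|²` and `tr F = tr G = ∑ ‖b i‖²`, so
Cauchy–Schwarz on the diagonal of `F` yields `(∑ ‖b i‖²)² ≤ d ∑ |F k k|² ≤ d ∑ |G i j|²`.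
-/

open Finset RCLike Matrix
open scoped InnerProductSpace

variable {m n 𝕜 : Type*} [Fintype m] [Fintype n] [RCLike 𝕜]

namespace Matrix

theorem trace_mul_conjTranspose_self_eq_sum_norm_sq (M : Matrix m n 𝕜) :
    (M * Mᴴ).trace = ((∑ i, ∑ j, ‖M i j‖ ^ 2 : ℝ) : 𝕜) := by
  push_cast
  simp only [trace, diag_apply, mul_apply, conjTranspose_apply, RCLike.star_def,
    RCLike.mul_conj]

theorem sum_norm_sq_mul_conjTranspose_self_eq (A : Matrix m n 𝕜) :
    ∑ i, ∑ j, ‖(A * Aᴴ) i j‖ ^ 2 = ∑ k, ∑ l, ‖(Aᴴ * A) k l‖ ^ 2 := by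
  apply RCLike.ofReal_injective (K := 𝕜)
  rw [← trace_mul_conjTranspose_self_eq_sum_norm_sq,
    ← trace_mul_conjTranspose_self_eq_sum_norm_sq, (isHermitian_mul_conjTranspose_self A).eq, (isHermitian_conjTranspose_mul_self A).eq,
    Matrix.mul_assoc, trace_mul_comm, Matrix.mul_assoc, Matrix.mul_assoc, Matrix.mul_assoc]

theorem sq_re_trace_le_card_mul_sum_norm_sq (M : Matrix n n 𝕜) :
    re M.trace ^ 2 ≤ Fintype.card n * ∑ k, ∑ l, ‖M k l‖ ^ 2 := by
  calc re M.trace ^ 2 = (∑ k, re (M k k)) ^ 2 := by simp [trace]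
    _ ≤ Fintype.card n * ∑ k, re (M k k) ^ 2 := sq_sum_le_card_mul_sum_sq
    _ ≤ Fintype.card n * ∑ k, ∑ l, ‖M k l‖ ^ 2 := by
      gcongr with k
      calc re (M k k) ^ 2 ≤ ‖M k k‖ ^ 2 := by
            rw [← sq_abs]; gcongr; exact abs_re_le_norm _
        _ ≤ ∑ l, ‖M k l‖ ^ 2 :=
          single_le_sum (f := fun l => ‖M k l‖ ^ 2) (fun _ _ => by positivity) (mem_univ k)

theorem sq_re_trace_mul_conjTranspose_self_le (A : Matrix m n 𝕜) :
    re (A * Aᴴ).trace ^ 2 ≤ Fintype.card n * ∑ i, ∑ j, ‖(A * Aᴴ) i j‖ ^ 2 := by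
  rw [trace_mul_comm, sum_norm_sq_mul_conjTranspose_self_eq]
  exact sq_re_trace_le_card_mul_sum_norm_sq _

end Matrix

variable {E : Type*} [NormedAddCommGroup E] [InnerProductSpace 𝕜 E]

omit [Fintype m] in
theorem OrthonormalBasis.gram_eq_mul_conjTranspose (e : OrthonormalBasis n 𝕜 E) (b : m → E) :
    gram 𝕜 b = of (fun i k => ⟪b i, e k⟫_𝕜) * (of fun i k => ⟪b i, e k⟫_𝕜)ᴴ := by
  ext i j
  simp [mul_apply, e.sum_inner_mul_inner]

variable (𝕜) in
theorem sq_sum_norm_sq_le_finrank_mul_sum_norm_inner_sq [FiniteDimensional 𝕜 E] (b : m → E) :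
    (∑ i, ‖b i‖ ^ 2) ^ 2 ≤ Module.finrank 𝕜 E * ∑ i, ∑ j, ‖⟪b i, b j⟫_𝕜‖ ^ 2 := by
  have htrace : re (gram 𝕜 b).trace = ∑ i, ‖b i‖ ^ 2 := by simp [trace]
  have h := sq_re_trace_mul_conjTranspose_self_le
    (of fun i k => ⟪b i, stdOrthonormalBasis 𝕜 E k⟫_𝕜)
  rwa [← OrthonormalBasis.gram_eq_mul_conjTranspose, htrace, Fintype.card_fin] at h

theorem welch_bound_general (d n : ℕ)
    (b : Fin n → EuclideanSpace ℂ (Fin d)) (hb : ∀ i, ‖b i‖ = 1) :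
    (n : ℝ) ^ 2 / (d : ℝ) ≤ ∑ i, ∑ j, ‖(inner ℂ (b i) (b j) : ℂ)‖ ^ 2 := by
  have h := sq_sum_norm_sq_le_finrank_mul_sum_norm_inner_sq ℂ b
  simp only [hb, finrank_euclideanSpace_fin] at h
  rcases Nat.eq_zero_or_pos d with rfl | hd
  · simp only [Nat.cast_zero, div_zero]
    positivity
  · rw [div_le_iff₀ (by exact_mod_cast hd)]
    simpa [mul_comm] using h

/-- **Welch bound**: for any `n` unit-norm vectors in `ℂ^d` with `n ≥ d`, the sum of all
squared pairwise inner-product magnitudes is at least `n²/d`. -/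
theorem welch_bound (d n : ℕ) (hn : d ≤ n)
    (b : Fin n → EuclideanSpace ℂ (Fin d)) (hb : ∀ i, ‖b i‖ = 1) :
    (n : ℝ) ^ 2 / (d : ℝ) ≤ ∑ i, ∑ j, ‖(inner ℂ (b i) (b j) : ℂ)‖ ^ 2 :=
  welch_bound_general d n b hb
end

section
/- If unit-norm vectors φ_1,...,φ_K in C^{N_p} (K ≥ N_p) attain the Welch bound with equality, i.e., Σ_i Σ_j |⟨φ_i,φ_j⟩|² = K²/N_p, then the frame is tight: Σ_{j=1}^K |⟨φ_i, φ_j⟩|² = K/N_p for every i. -/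
/-!
Let `Φ` be the matrix whose columns are the coordinates of the `φ j`, so that `ΦᴴΦ` is the Gram
matrix and `S = ΦΦᴴ` is the frame operator. Then `tr S = ∑ ‖φ j‖² = K` and
`tr S² = ∑ᵢⱼ |⟨φ i, φ j⟩|² = K²/N`, hence `‖S - (K/N) I‖²_F = tr S² - 2 (K/N) tr S + K²/N = 0`:
the frame is tight, `S = (K/N) I`. The `i`-th row sum of the squared Gram matrix is
`(ΦᴴSΦ) i i = (K/N) ‖φ i‖² = K/N`.
-/

open scoped ComplexOrder InnerProductSpace

namespace Matrix

variable {𝕜 m n : Type*} [RCLike 𝕜] [Fintype n]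

theorem IsHermitian.eq_smul_one_of_trace_mul_self [DecidableEq n] {S : Matrix n n 𝕜}
    (hS : S.IsHermitian) {t : ℝ} (htr : S.trace = t)
    (htr2 : (S * S).trace = ((t ^ 2 / Fintype.card n : ℝ) : 𝕜)) :
    S = ((t / Fintype.card n : ℝ) : 𝕜) • (1 : Matrix n n 𝕜) := by
  set c : ℝ := t / Fintype.card n with hc
  have hB : (S - (c : 𝕜) • 1).IsHermitian :=
    hS.sub (isHermitian_one.smul (RCLike.conj_ofReal c))
  have hvanish : t ^ 2 / Fintype.card n - c * t - (c * t - c * c * Fintype.card n) = 0 := by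
    rcases eq_or_ne (Fintype.card n : ℝ) 0 with h | h
    · simp [hc, h]
    · rw [hc]; field_simp; ring
  have hBB : ((S - (c : 𝕜) • 1)ᴴ * (S - (c : 𝕜) • 1)).trace = 0 := by
    rw [hB.eq]
    simp only [sub_mul, mul_sub, Matrix.smul_mul, Matrix.mul_smul, one_mul, mul_one, smul_smul,
      trace_sub, trace_smul, trace_one, htr, htr2, smul_eq_mul]
    exact_mod_cast hvanish
  exact sub_eq_zero.mp (trace_conjTranspose_mul_self_eq_zero_iff.mp hBB)

theorem mul_conjTranspose_self_apply_self (A : Matrix m n 𝕜) (i : m) :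
    (A * Aᴴ) i i = ((∑ j, ‖A i j‖ ^ 2 : ℝ) : 𝕜) := by
  simp [mul_apply, RCLike.mul_conj]

theorem trace_mul_conjTranspose_self [Fintype m] (A : Matrix m n 𝕜) :
    (A * Aᴴ).trace = ((∑ i, ∑ j, ‖A i j‖ ^ 2 : ℝ) : 𝕜) := by
  simp [trace, mul_conjTranspose_self_apply_self]

theorem conjTranspose_mul_self_row_sum_eq_of_welch_bound_eq [Fintype m] (Φ : Matrix m n 𝕜)
    (hdiag : ∀ i, (Φᴴ * Φ) i i = 1)
    (hwbe : ∑ i, ∑ j, ‖(Φᴴ * Φ) i j‖ ^ 2 = (Fintype.card n : ℝ) ^ 2 / Fintype.card m) (i : n) :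
    ∑ j, ‖(Φᴴ * Φ) i j‖ ^ 2 = (Fintype.card n : ℝ) / Fintype.card m := by
  classical
  have htr : (Φ * Φᴴ).trace = (Fintype.card n : ℝ) := by
    rw [trace_mul_comm]; simp [trace, hdiag]
  have htr2 : (Φ * Φᴴ * (Φ * Φᴴ)).trace =
      (((Fintype.card n : ℝ) ^ 2 / Fintype.card m : ℝ) : 𝕜) := by
    rw [← hwbe, ← trace_mul_conjTranspose_self, conjTranspose_mul, conjTranspose_conjTranspose,
      Matrix.mul_assoc, trace_mul_comm]
    simp only [Matrix.mul_assoc]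
  have hS := (isHermitian_mul_conjTranspose_self Φ).eq_smul_one_of_trace_mul_self htr htr2
  have hGG : Φᴴ * Φ * (Φᴴ * Φ)ᴴ = ((Fintype.card n / Fintype.card m : ℝ) : 𝕜) • (Φᴴ * Φ) := by
    rw [conjTranspose_mul, conjTranspose_conjTranspose, Matrix.mul_assoc, ← Matrix.mul_assoc Φ,
      hS, Matrix.smul_mul, Matrix.mul_smul, Matrix.one_mul]
  have hrow := mul_conjTranspose_self_apply_self (Φᴴ * Φ) i
  rw [hGG, smul_apply, hdiag, smul_eq_mul, mul_one] at hrow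
  exact_mod_cast hrow.symm

end Matrix

open Matrix Module

theorem sum_norm_inner_sq_eq_of_welch_bound_eq {𝕜 E ι : Type*} [RCLike 𝕜] [NormedAddCommGroup E]
    [InnerProductSpace 𝕜 E] [FiniteDimensional 𝕜 E] [Fintype ι] (v : ι → E) (hv : ∀ i, ‖v i‖ = 1)
    (hwbe : ∑ i, ∑ j, ‖⟪v i, v j⟫_𝕜‖ ^ 2 = (Fintype.card ι : ℝ) ^ 2 / finrank 𝕜 E) (i : ι) :
    ∑ j, ‖⟪v i, v j⟫_𝕜‖ ^ 2 = (Fintype.card ι : ℝ) / finrank 𝕜 E := by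
  let Φ : Matrix (Fin (finrank 𝕜 E)) ι 𝕜 := of fun a j ↦ (stdOrthonormalBasis 𝕜 E).repr (v j) a
  have hG : gram 𝕜 v = Φᴴ * Φ := gram_eq_conjTranspose_mul _ v
  have hdiag (j : ι) : (Φᴴ * Φ) j j = 1 := by simp [← hG, inner_self_eq_norm_sq_to_K, hv]
  have hrow := Φ.conjTranspose_mul_self_row_sum_eq_of_welch_bound_eq hdiag
    (by simpa [← hG] using hwbe) i
  simpa [← hG] using hrow

theorem wbe_rowsum_general (K Np : ℕ)
    (φ : Fin K → EuclideanSpace ℂ (Fin Np)) (hφ : ∀ k, ‖φ k‖ = 1)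
    (hwbe : ∑ i, ∑ j, ‖(inner ℂ (φ i) (φ j) : ℂ)‖ ^ 2 = (K : ℝ) ^ 2 / (Np : ℝ)) :
    ∀ i, ∑ j, ‖(inner ℂ (φ i) (φ j) : ℂ)‖ ^ 2 = (K : ℝ) / (Np : ℝ) := by
  simpa using sum_norm_inner_sq_eq_of_welch_bound_eq (𝕜 := ℂ) φ hφ (by simpa using hwbe)

/-- Unit-norm vectors attaining the Welch bound with equality form a tight frame:
every row sum of the squared correlation matrix equals `K/N_p`. -/
theorem wbe_rowsum (K Np : ℕ) (hNp : 0 < Np) (hK : Np ≤ K)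
    (φ : Fin K → EuclideanSpace ℂ (Fin Np)) (hφ : ∀ k, ‖φ k‖ = 1)
    (hwbe : ∑ i, ∑ j, ‖(inner ℂ (φ i) (φ j) : ℂ)‖ ^ 2 = (K : ℝ) ^ 2 / (Np : ℝ)) :
    ∀ i, ∑ j, ‖(inner ℂ (φ i) (φ j) : ℂ)‖ ^ 2 = (K : ℝ) / (Np : ℝ) :=
  wbe_rowsum_general K Np φ hφ hwbe
end

section
/- If unit-norm vectors φ_1,...,φ_K in C^{N_p} (K ≥ N_p) are WBE sequences, then the matrix Φ̄ with entries |⟨φ_i,φ_j⟩|² has spectral radius exactly K/N_p, and this is the minimum spectral radius over all choices of K unit-norm vectors in C^{N_p}. -/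
/-! Write `V` for the matrix with columns `φ_k`, so that the Gram matrix is `G = VᴴV` and the
frame operator is `S = VVᴴ`. Since `tr (GGᴴ) = tr (SSᴴ)`,
`Σ_{ij} Φ̄_{ij} = ‖S‖_F² ≥ (tr S)² / N_p = K² / N_p` (the Welch bound), with equality iff
`S = (K / N_p) I`. For WBE sequences every row of `Φ̄` therefore sums to `φ_iᴴ S φ_i = K / N_p`,
and a nonnegative matrix with constant row sums `c` has spectral radius `c` (the all-ones
eigenvector, and Gershgorin's theorem). For arbitrary unit vectors `Φ̄` is symmetric, so its
largest eigenvalue is at least the Rayleigh quotient of the all-ones vector,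
`Σ_{ij} Φ̄_{ij} / K ≥ K / N_p`. -/

/-- Spectral radius of a real square matrix: the largest absolute value of a
(complex) eigenvalue. -/
noncomputable def specRad {n : ℕ} (A : Matrix (Fin n) (Fin n) ℝ) : ℝ :=
  sSup {r : ℝ | ∃ z ∈ spectrum ℂ (A.map (fun x => (x : ℂ))), r = ‖z‖}

/-- The squared-correlation (Gram-type) matrix `Φ̄_{ij} = |⟨φ_i, φ_j⟩|²`. -/
noncomputable def corrMat {K Np : ℕ} (φ : Fin K → EuclideanSpace ℂ (Fin Np)) :
    Matrix (Fin K) (Fin K) ℝ :=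
  fun i j => ‖(inner ℂ (φ i) (φ j) : ℂ)‖ ^ 2

open Matrix

namespace Matrix

variable {𝕜 : Type*} [RCLike 𝕜] {m n : Type*} [Fintype n]

theorem ofReal_sum_norm_sq_row (M : Matrix m n 𝕜) (i : m) :
    ((∑ j, ‖M i j‖ ^ 2 : ℝ) : 𝕜) = (M * Mᴴ) i i := by
  simp [mul_apply, RCLike.mul_conj]

theorem ofReal_sum_sum_norm_sq [Fintype m] (M : Matrix m n 𝕜) :
    ((∑ i, ∑ j, ‖M i j‖ ^ 2 : ℝ) : 𝕜) = trace (M * Mᴴ) := by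
  simp only [RCLike.ofReal_sum, ← ofReal_sum_norm_sq_row, trace, diag]

theorem sum_norm_sq_conjTranspose_mul_self [Fintype m] (V : Matrix m n 𝕜) :
    ∑ i, ∑ j, ‖(Vᴴ * V) i j‖ ^ 2 = ∑ a, ∑ b, ‖(V * Vᴴ) a b‖ ^ 2 := by
  apply RCLike.ofReal_injective (K := 𝕜)
  simp only [ofReal_sum_sum_norm_sq, conjTranspose_mul, conjTranspose_conjTranspose,
    Matrix.mul_assoc]
  rw [trace_mul_comm, Matrix.mul_assoc, Matrix.mul_assoc]

variable [DecidableEq n]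

theorem sum_norm_sq_sub_smul_one (M : Matrix n n 𝕜) (c : ℝ) :
    ∑ a, ∑ b, ‖(M - (c : 𝕜) • 1) a b‖ ^ 2
      = ∑ a, ∑ b, ‖M a b‖ ^ 2 - 2 * c * RCLike.re (trace M) + c ^ 2 * Fintype.card n := by
  have hentry (a b : n) : ‖(M - (c : 𝕜) • 1) a b‖ ^ 2
      = ‖M a b‖ ^ 2 + if a = b then c ^ 2 - 2 * c * RCLike.re (M a a) else 0 := by
    by_cases hab : a = b
    · subst hab
      simp only [sub_apply, smul_apply, one_apply_eq, smul_eq_mul, mul_one, if_true,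
        RCLike.norm_sq_eq_def, map_sub, RCLike.ofReal_re, RCLike.ofReal_im]
      ring
    · simp [hab]
  simp only [hentry, Finset.sum_add_distrib, Finset.sum_ite_eq, Finset.mem_univ, if_true,
    Finset.sum_sub_distrib, trace, diag, map_sum, Finset.mul_sum]
  rw [Finset.sum_const, Finset.card_univ, nsmul_eq_mul]
  ring

theorem sum_norm_sq_sub_trace_smul_one (M : Matrix n n 𝕜) :
    ∑ a, ∑ b, ‖(M - ((RCLike.re (trace M) / Fintype.card n : ℝ) : 𝕜) • 1) a b‖ ^ 2
      = ∑ a, ∑ b, ‖M a b‖ ^ 2 - RCLike.re (trace M) ^ 2 / Fintype.card n := by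
  rw [sum_norm_sq_sub_smul_one]
  rcases (Fintype.card n).eq_zero_or_pos with hn | hn
  · simp [hn]
  · field_simp
    ring

theorem sq_re_trace_div_card_le_sum_norm_sq (M : Matrix n n 𝕜) :
    RCLike.re (trace M) ^ 2 / Fintype.card n ≤ ∑ a, ∑ b, ‖M a b‖ ^ 2 := by
  rw [← sub_nonneg, ← sum_norm_sq_sub_trace_smul_one]
  positivity

theorem eq_smul_one_of_sum_norm_sq_eq {M : Matrix n n 𝕜}
    (hM : ∑ a, ∑ b, ‖M a b‖ ^ 2 = RCLike.re (trace M) ^ 2 / Fintype.card n) :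
    M = ((RCLike.re (trace M) / Fintype.card n : ℝ) : 𝕜) • 1 := by
  have hzero := sum_norm_sq_sub_trace_smul_one M
  rw [hM, sub_self] at hzero
  ext a b
  rw [← sub_eq_zero, ← sub_apply, ← norm_eq_zero, ← sq_eq_zero_iff]
  simp only [Finset.mem_univ, true_implies,
    Finset.sum_eq_zero_iff_of_nonneg fun _ _ => Finset.sum_nonneg fun _ _ => sq_nonneg _,
    Finset.sum_eq_zero_iff_of_nonneg fun _ _ => sq_nonneg _] at hzero
  exact hzero a b

end Matrix

section Frame

variable {𝕜 : Type*} [RCLike 𝕜] {ι m : Type*} [Fintype m]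

def synthesisMatrix (v : ι → EuclideanSpace 𝕜 m) : Matrix m ι 𝕜 :=
  Matrix.of fun a j => v j a

def frameMatrix (v : ι → EuclideanSpace 𝕜 m) [Fintype ι] : Matrix m m 𝕜 :=
  synthesisMatrix v * (synthesisMatrix v)ᴴ

theorem gram_eq_conjTranspose_mul_synthesisMatrix (v : ι → EuclideanSpace 𝕜 m) :
    gram 𝕜 v = (synthesisMatrix v)ᴴ * synthesisMatrix v := by
  ext i j
  simp [synthesisMatrix, mul_apply, EuclideanSpace.inner_eq_star_dotProduct, dotProduct, mul_comm]

variable [Fintype ι]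

theorem sum_norm_sq_inner_eq_sum_norm_sq_frameMatrix (v : ι → EuclideanSpace 𝕜 m) :
    ∑ i, ∑ j, ‖(inner 𝕜 (v i) (v j) : 𝕜)‖ ^ 2 = ∑ a, ∑ b, ‖frameMatrix v a b‖ ^ 2 := by
  rw [frameMatrix, ← sum_norm_sq_conjTranspose_mul_self,
    ← gram_eq_conjTranspose_mul_synthesisMatrix]
  rfl

theorem re_trace_frameMatrix (v : ι → EuclideanSpace 𝕜 m) :
    RCLike.re (trace (frameMatrix v)) = ∑ j, ‖v j‖ ^ 2 := by
  rw [frameMatrix, trace_mul_comm, ← gram_eq_conjTranspose_mul_synthesisMatrix]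
  simp [trace, inner_self_eq_norm_sq_to_K]

theorem card_sq_div_card_le_sum_norm_sq_inner {v : ι → EuclideanSpace 𝕜 m}
    (hv : ∀ j, ‖v j‖ = 1) :
    (Fintype.card ι : ℝ) ^ 2 / Fintype.card m ≤ ∑ i, ∑ j, ‖(inner 𝕜 (v i) (v j) : 𝕜)‖ ^ 2 := by
  classical
  have hwelch := sq_re_trace_div_card_le_sum_norm_sq (frameMatrix v)
  rw [re_trace_frameMatrix, ← sum_norm_sq_inner_eq_sum_norm_sq_frameMatrix] at hwelch
  simpa [hv] using hwelch

theorem frameMatrix_eq_smul_one_of_sum_norm_sq_inner_eq [DecidableEq m]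
    {v : ι → EuclideanSpace 𝕜 m} (hv : ∀ j, ‖v j‖ = 1)
    (hwbe : ∑ i, ∑ j, ‖(inner 𝕜 (v i) (v j) : 𝕜)‖ ^ 2
      = (Fintype.card ι : ℝ) ^ 2 / Fintype.card m) :
    frameMatrix v = ((Fintype.card ι / Fintype.card m : ℝ) : 𝕜) • 1 := by
  have htrace := re_trace_frameMatrix v
  simp only [hv, one_pow, Finset.sum_const, Finset.card_univ, nsmul_eq_mul, mul_one] at htrace
  refine htrace ▸ eq_smul_one_of_sum_norm_sq_eq ?_
  rw [htrace, ← sum_norm_sq_inner_eq_sum_norm_sq_frameMatrix, hwbe]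

theorem sum_norm_sq_inner_eq_of_frameMatrix_eq_smul_one [DecidableEq m]
    {v : ι → EuclideanSpace 𝕜 m} {c : ℝ} (hv : frameMatrix v = (c : 𝕜) • 1) (i : ι) :
    ∑ j, ‖(inner 𝕜 (v i) (v j) : 𝕜)‖ ^ 2 = c * ‖v i‖ ^ 2 := by
  apply RCLike.ofReal_injective (K := 𝕜)
  have hrow := ofReal_sum_norm_sq_row (gram 𝕜 v) i
  simp only [gram_apply] at hrow
  rw [hrow, (isHermitian_gram 𝕜 v).eq, gram_eq_conjTranspose_mul_synthesisMatrix,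
    Matrix.mul_assoc, ← Matrix.mul_assoc (synthesisMatrix v), ← frameMatrix, hv, Matrix.smul_mul,
    Matrix.one_mul, Matrix.mul_smul, ← gram_eq_conjTranspose_mul_synthesisMatrix]
  simp [inner_self_eq_norm_sq_to_K]

end Frame

namespace Matrix

theorem exists_norm_le_sum_norm_of_mem_spectrum {K n : Type*} [NormedField K] [Fintype n]
    [DecidableEq n] {A : Matrix n n K} {μ : K} (hμ : μ ∈ spectrum K A) :
    ∃ i, ‖μ‖ ≤ ∑ j, ‖A i j‖ := by
  rw [← spectrum_toLin', ← Module.End.hasEigenvalue_iff_mem_spectrum] at hμ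
  obtain ⟨k, hk⟩ := eigenvalue_mem_ball hμ
  refine ⟨k, ?_⟩
  rw [← Finset.add_sum_erase _ _ (Finset.mem_univ k)]
  calc ‖μ‖ ≤ ‖A k k‖ + ‖μ - A k k‖ := norm_le_norm_add_norm_sub' μ (A k k)
    _ ≤ _ := by gcongr; exact mem_closedBall_iff_norm.mp hk

theorem mem_spectrum_of_mulVec_eq_smul {n R : Type*} [Fintype n] [DecidableEq n] [Field R]
    {A : Matrix n n R} {v : n → R} (hv : v ≠ 0) {μ : R} (h : A *ᵥ v = μ • v) :
    μ ∈ spectrum R A := by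
  rw [← spectrum_toLin', ← Module.End.hasEigenvalue_iff_mem_spectrum]
  exact Module.End.hasEigenvalue_of_hasEigenvector ⟨Module.End.mem_eigenspace_iff.mpr h, hv⟩

theorem ofReal_mem_spectrum_map {n : Type*} [Fintype n] [DecidableEq n] {A : Matrix n n ℝ}
    {r : ℝ} (hr : r ∈ spectrum ℝ A) : (r : ℂ) ∈ spectrum ℂ (A.map (fun x => (x : ℂ))) := by
  rw [mem_spectrum_iff_isRoot_charpoly] at hr ⊢
  exact charpoly_map A Complex.ofRealHom ▸ hr.map

theorem IsHermitian.exists_mem_spectrum_sum_le {n : Type*} [Fintype n] [DecidableEq n]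
    [Nonempty n] {A : Matrix n n ℝ} (hA : A.IsHermitian) :
    ∃ r ∈ spectrum ℝ A, ∑ i, ∑ j, A i j ≤ r * Fintype.card n := by
  set T := toEuclideanLin A
  have hT : T.IsSymmetric := isSymmetric_toEuclideanLin_iff.mpr hA
  set x : EuclideanSpace ℝ n := WithLp.toLp 2 (fun _ => 1)
  have hx : x ≠ 0 := by simp [x, funext_iff]
  have hbdd : BddAbove (Set.range fun y : {y : EuclideanSpace ℝ n // y ≠ 0} =>
      RCLike.re (inner ℝ (T y) (y : EuclideanSpace ℝ n)) / ‖(y : EuclideanSpace ℝ n)‖ ^ 2) := by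
    refine ⟨‖LinearMap.toContinuousLinearMap T‖, ?_⟩
    rintro _ ⟨y, rfl⟩
    exact (le_abs_self _).trans ((LinearMap.toContinuousLinearMap T).rayleighQuotient_le_norm y)
  have hquot : RCLike.re (inner ℝ (T x) x) / ‖x‖ ^ 2 = (∑ i, ∑ j, A i j) / Fintype.card n := by
    simp [T, x, EuclideanSpace.norm_eq, EuclideanSpace.inner_eq_star_dotProduct, mulVec, dotProduct]
  refine ⟨_, spectrum_toLpLin (A := A) 2 ▸
    hT.hasEigenvalue_iSup_of_finiteDimensional.mem_spectrum, ?_⟩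
  rw [← div_le_iff₀ (by positivity), ← hquot]
  exact le_ciSup hbdd ⟨x, hx⟩

end Matrix

theorem le_specRad {n : ℕ} (A : Matrix (Fin n) (Fin n) ℝ) {z : ℂ}
    (hz : z ∈ spectrum ℂ (A.map (fun x => (x : ℂ)))) : ‖z‖ ≤ specRad A := by
  refine le_csSup ?_ ⟨z, hz, rfl⟩
  refine ((finite_spectrum (A.map (fun x => (x : ℂ)))).image (‖·‖)).bddAbove.mono ?_
  rintro _ ⟨w, hw, rfl⟩
  exact ⟨w, hw, rfl⟩

theorem specRad_le {n : ℕ} {A : Matrix (Fin n) (Fin n) ℝ} (hA : ∀ i j, 0 ≤ A i j) {c : ℝ}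
    (hc : 0 ≤ c) (hrow : ∀ i, ∑ j, A i j ≤ c) : specRad A ≤ c := by
  refine Real.sSup_le ?_ hc
  rintro _ ⟨z, hz, rfl⟩
  obtain ⟨i, hi⟩ := exists_norm_le_sum_norm_of_mem_spectrum hz
  calc ‖z‖ ≤ ∑ j, ‖(A i j : ℂ)‖ := hi
    _ = ∑ j, A i j := by simp only [Complex.norm_real, Real.norm_of_nonneg (hA i _)]
    _ ≤ c := hrow i

theorem specRad_eq_of_sum_row_eq {n : ℕ} (hn : 0 < n) {A : Matrix (Fin n) (Fin n) ℝ}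
    (hA : ∀ i j, 0 ≤ A i j) {c : ℝ} (hrow : ∀ i, ∑ j, A i j = c) : specRad A = c := by
  have hc : 0 ≤ c := hrow ⟨0, hn⟩ ▸ Finset.sum_nonneg fun j _ => hA _ j
  refine (specRad_le hA hc fun i => (hrow i).le).antisymm ?_
  have hones : A *ᵥ (fun _ => 1) = c • fun _ => 1 := by
    ext i
    simp [mulVec, dotProduct, hrow i]
  have : Nonempty (Fin n) := ⟨⟨0, hn⟩⟩
  have hmem := ofReal_mem_spectrum_map <|
    mem_spectrum_of_mulVec_eq_smul (by simp [funext_iff]) hones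
  simpa [abs_of_nonneg hc] using le_specRad A hmem

theorem sum_div_card_le_specRad {n : ℕ} (hn : 0 < n) {A : Matrix (Fin n) (Fin n) ℝ}
    (hA : A.IsHermitian) : (∑ i, ∑ j, A i j) / n ≤ specRad A := by
  have : Nonempty (Fin n) := ⟨⟨0, hn⟩⟩
  obtain ⟨r, hr, hsum⟩ := hA.exists_mem_spectrum_sum_le
  rw [Fintype.card_fin] at hsum
  calc (∑ i, ∑ j, A i j) / n ≤ r := (div_le_iff₀ (by positivity)).mpr hsum
    _ ≤ ‖(r : ℂ)‖ := by simpa using le_abs_self r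
    _ ≤ specRad A := le_specRad A (ofReal_mem_spectrum_map hr)

theorem isHermitian_corrMat {K Np : ℕ} (φ : Fin K → EuclideanSpace ℂ (Fin Np)) :
    (corrMat φ).IsHermitian :=
  Matrix.ext fun i j => by simp [corrMat, norm_inner_symm]

/-- For WBE sequences the squared correlation matrix has spectral radius exactly
`K/N_p`, and this value is the minimum spectral radius over all choices of `K`
unit-norm vectors in `ℂ^{N_p}`. -/
theorem specRad_corrMat_of_wbe (K Np : ℕ) (hNp : 0 < Np) (hK : Np ≤ K)
    (φ : Fin K → EuclideanSpace ℂ (Fin Np)) (hφ : ∀ k, ‖φ k‖ = 1)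
    (hwbe : ∑ i, ∑ j, ‖(inner ℂ (φ i) (φ j) : ℂ)‖ ^ 2 = (K : ℝ) ^ 2 / (Np : ℝ)) :
    specRad (corrMat φ) = (K : ℝ) / (Np : ℝ) ∧
      ∀ ψ : Fin K → EuclideanSpace ℂ (Fin Np), (∀ k, ‖ψ k‖ = 1) →
        specRad (corrMat φ) ≤ specRad (corrMat ψ) := by
  have hK0 : 0 < K := hNp.trans_le hK
  have hframe := frameMatrix_eq_smul_one_of_sum_norm_sq_inner_eq hφ (by simpa using hwbe)
  have hrow (i : Fin K) : ∑ j, corrMat φ i j = K / Np := by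
    simpa [corrMat, hφ] using sum_norm_sq_inner_eq_of_frameMatrix_eq_smul_one hframe i
  have hspec : specRad (corrMat φ) = K / Np :=
    specRad_eq_of_sum_row_eq hK0 (fun i j => sq_nonneg _) hrow
  refine ⟨hspec, fun ψ hψ => ?_⟩
  calc specRad (corrMat φ) = (K ^ 2 / Np : ℝ) / K := by rw [hspec]; field_simp
    _ ≤ (∑ i, ∑ j, corrMat ψ i j) / K := by
      gcongr
      simpa [corrMat] using card_sq_div_card_le_sum_norm_sq_inner hψ
    _ ≤ specRad (corrMat ψ) := sum_div_card_le_specRad hK0 (isHermitian_corrMat ψ)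
end

section
/- If the equal-error LMMSE estimation level e ∈ (0,1) is achievable for K users with pilot correlation matrix Φ̄ (i.e., ρ(Φ̄) < 1/(1−e)), and ρ(Φ̄) ≥ K/N_p with K > N_p, then e ≥ (K − N_p)/K; moreover for WBE sequences (ρ(Φ̄) = K/N_p) this bound is the infimum. -/
/-! Achievability `ρ(Φ̄) < 1/(1-e)` is equivalent to `e > 1 - 1/ρ(Φ̄)`, and `1 - 1/ρ` is monotone
in `ρ`; at the WBE value `ρ = K/N_p` it equals `(K - N_p)/K`, so the achievable errors form the
interval `((K - N_p)/K, 1)`. -/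

open Set

lemma div_lt_one_div_one_sub_iff {k n e : ℝ} (hn : 0 < n) (hk : 0 < k) (he : e < 1) :
    k / n < 1 / (1 - e) ↔ (k - n) / k < e := by
  rw [div_lt_div_iff₀ hn (sub_pos.2 he), div_lt_iff₀ hk]
  constructor <;> intro h <;> linarith

lemma setOf_div_lt_one_div_one_sub_eq_Ioo {k n : ℝ} (hn : 0 < n) (hnk : n ≤ k) :
    {e : ℝ | 0 < e ∧ e < 1 ∧ k / n < 1 / (1 - e)} = Ioo ((k - n) / k) 1 := by
  have hk : 0 < k := hn.trans_le hnk
  ext e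
  constructor
  · rintro ⟨-, he1, hach⟩
    exact ⟨(div_lt_one_div_one_sub_iff hn hk he1).1 hach, he1⟩
  · rintro ⟨hlow, he1⟩
    have hlow_nonneg : 0 ≤ (k - n) / k := div_nonneg (sub_nonneg.2 hnk) hk.le
    exact ⟨hlow_nonneg.trans_lt hlow, he1, (div_lt_one_div_one_sub_iff hn hk he1).2 hlow⟩

theorem lmmse_error_lower_bound_general (K Np : ℕ) (hNp : 0 < Np) (hK : Np < K)
    (Φ : Matrix (Fin K) (Fin K) ℝ) (hρ : (K : ℝ) / (Np : ℝ) ≤ specRad Φ)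
    (e : ℝ) (he1 : e < 1) (hach : specRad Φ < 1 / (1 - e)) :
    ((K : ℝ) - Np) / K ≤ e ∧
      (specRad Φ = (K : ℝ) / (Np : ℝ) →
        IsGLB {e' : ℝ | 0 < e' ∧ e' < 1 ∧ specRad Φ < 1 / (1 - e')}
          (((K : ℝ) - Np) / K)) := by
  have hn : (0 : ℝ) < Np := Nat.cast_pos.2 hNp
  have hnk : (Np : ℝ) < K := Nat.cast_lt.2 hK
  have hk : (0 : ℝ) < K := hn.trans hnk
  refine ⟨((div_lt_one_div_one_sub_iff hn hk he1).1 (hρ.trans_lt hach)).le, fun hwbe => ?_⟩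
  rw [hwbe, setOf_div_lt_one_div_one_sub_eq_Ioo hn hnk.le]
  exact isGLB_Ioo ((div_lt_one hk).2 (sub_lt_self _ hn))

/-- If the equal LMMSE error level `e ∈ (0,1)` is achievable, i.e. `ρ(Φ̄) < 1/(1−e)`,
and `ρ(Φ̄) ≥ K/N_p` with `K > N_p`, then `e ≥ (K − N_p)/K`; moreover for WBE pilots,
where `ρ(Φ̄) = K/N_p`, the value `(K − N_p)/K` is the infimum of achievable errors. -/
theorem lmmse_error_lower_bound (K Np : ℕ) (hNp : 0 < Np) (hK : Np < K)
    (Φ : Matrix (Fin K) (Fin K) ℝ) (hρ : (K : ℝ) / (Np : ℝ) ≤ specRad Φ)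
    (e : ℝ) (he0 : 0 < e) (he1 : e < 1) (hach : specRad Φ < 1 / (1 - e)) :
    ((K : ℝ) - Np) / K ≤ e ∧
      (specRad Φ = (K : ℝ) / (Np : ℝ) →
        IsGLB {e' : ℝ | 0 < e' ∧ e' < 1 ∧ specRad Φ < 1 / (1 - e')}
          (((K : ℝ) - Np) / K)) :=
  lmmse_error_lower_bound_general K Np hNp hK Φ hρ e he1 hach
end

section
/- Under WBE pilots with row-sum K/N_p, for target LS error e with N_p(1+e) > K, the unique equal-error minimum power solution is μ_k = σ²/(N_p(1+e) − K) for every k; equivalently q_k = σ²/((N_p(1+e) − K) β_k). -/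
/-!
Write `μ_k = β_k q_k` and `Ψ = Φ - 1`, a nonnegative matrix with row sums `ρ = K/N_p - 1`;
the equations read `Ψ μ + σ²/N_p = e μ`. At a maximal coordinate `μ_max`,
`e μ_max ≤ ρ μ_max + σ²/N_p`, and at a minimal one the reverse inequality holds; since
`e > ρ` both force `μ_max ≤ σ²/(N_p(e - ρ)) ≤ μ_min`, so `μ` is constant, equal to
`σ²/(N_p(1+e) - K)`.
-/

open Finset Matrix

section FixedPoint

variable {ι : Type*} [Fintype ι] {Ψ : Matrix ι ι ℝ} {ρ c e : ℝ} {μ : ι → ℝ}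

theorem mulVec_apply_le_of_le_const (hnn : ∀ i j, 0 ≤ Ψ i j) (hrow : ∀ i, ∑ j, Ψ i j = ρ)
    {M : ℝ} (hM : ∀ j, μ j ≤ M) (i : ι) : (Ψ *ᵥ μ) i ≤ ρ * M := by
  rw [← hrow i, sum_mul]
  exact sum_le_sum fun j _ => mul_le_mul_of_nonneg_left (hM j) (hnn i j)

theorem le_div_of_mulVec_add_eq_mul (hnn : ∀ i j, 0 ≤ Ψ i j) (hrow : ∀ i, ∑ j, Ψ i j = ρ)
    (hρe : ρ < e) (hfix : ∀ i, (Ψ *ᵥ μ) i + c = e * μ i) (i : ι) : μ i ≤ c / (e - ρ) := by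
  obtain ⟨k, -, hk⟩ := exists_max_image univ μ ⟨i, mem_univ i⟩
  have hmax : ∀ j, μ j ≤ μ k := fun j => hk j (mem_univ j)
  have hk_le : (e - ρ) * μ k ≤ c := by
    have := mulVec_apply_le_of_le_const hnn hrow hmax k
    linarith [hfix k]
  exact (hmax i).trans ((le_div_iff₀' (sub_pos.2 hρe)).2 hk_le)

theorem mulVec_add_eq_mul_iff (hnn : ∀ i j, 0 ≤ Ψ i j) (hrow : ∀ i, ∑ j, Ψ i j = ρ)
    (hρe : ρ < e) : (∀ i, (Ψ *ᵥ μ) i + c = e * μ i) ↔ ∀ i, μ i = c / (e - ρ) := by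
  have hne : e - ρ ≠ 0 := (sub_pos.2 hρe).ne'
  constructor
  · intro hfix i
    have hneg : ∀ i, (Ψ *ᵥ -μ) i + -c = e * (-μ) i := fun i => by
      simp only [mulVec_neg, Pi.neg_apply]
      linarith [hfix i]
    have hlow := le_div_of_mulVec_add_eq_mul hnn hrow hρe hneg i
    rw [Pi.neg_apply, neg_div] at hlow
    exact le_antisymm (le_div_of_mulVec_add_eq_mul hnn hrow hρe hfix i) (by linarith)
  · intro hμ i
    have hconst : μ = fun _ => c / (e - ρ) := funext hμ
    simp only [hconst, mulVec, dotProduct, ← sum_mul, hrow]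
    field_simp
    ring

end FixedPoint

theorem sub_one_mulVec_apply {ι : Type*} [Fintype ι] [DecidableEq ι] {Φ : Matrix ι ι ℝ}
    (hdiag : ∀ k, Φ k k = 1) (μ : ι → ℝ) (k : ι) :
    ((Φ - 1) *ᵥ μ) k = ∑ j ∈ univ.erase k, Φ k j * μ j := by
  rw [sub_mulVec, one_mulVec, Pi.sub_apply, mulVec, dotProduct,
    ← add_sum_erase univ _ (mem_univ k), hdiag]
  ring

theorem wbe_ls_optimal_powers_general (K Np : ℕ) (hNp : 0 < Np)
    (Φ : Matrix (Fin K) (Fin K) ℝ) (hnn : ∀ i j, 0 ≤ Φ i j)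
    (hdiag : ∀ k, Φ k k = 1) (hrow : ∀ k, ∑ j, Φ k j = (K : ℝ) / Np)
    (σ2 : ℝ) (e : ℝ) (he : (K : ℝ) < Np * (1 + e))
    (β q : Fin K → ℝ) (hβ : ∀ k, 0 < β k) :
    (∀ k, ∑ j ∈ univ.erase k, Φ k j * (β j * q j) + σ2 / Np = e * (β k * q k)) ↔
      ∀ k, q k = σ2 / (((Np : ℝ) * (1 + e) - K) * β k) := by
  have hNp' : (0 : ℝ) < Np := by exact_mod_cast hNp
  have hnn' : ∀ i j, 0 ≤ (Φ - 1) i j := fun i j => by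
    by_cases hij : i = j
    · simp [hij, hdiag]
    · simpa [hij] using hnn i j
  have hrow' : ∀ i, ∑ j, (Φ - 1) i j = (K : ℝ) / Np - 1 := fun i => by
    simp [sum_sub_distrib, one_apply, hrow]
  have hρe : (K : ℝ) / Np - 1 < e := by
    rw [sub_lt_iff_lt_add, div_lt_iff₀ hNp']
    linarith
  have hμ : σ2 / Np / (e - ((K : ℝ) / Np - 1)) = σ2 / ((Np : ℝ) * (1 + e) - K) := by
    rw [show e - ((K : ℝ) / Np - 1) = ((Np : ℝ) * (1 + e) - K) / Np by field_simp; ring,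
      div_div_div_cancel_right₀ hNp'.ne']
  have hq : ∀ k, β k * q k = σ2 / ((Np : ℝ) * (1 + e) - K) ↔
      q k = σ2 / (((Np : ℝ) * (1 + e) - K) * β k) := fun k => by
    rw [← div_div, eq_div_iff (hβ k).ne', mul_comm]
  simp_rw [← sub_one_mulVec_apply hdiag (fun j => β j * q j),
    mulVec_add_eq_mul_iff hnn' hrow' hρe, hμ, hq]

/-- Under WBE pilots (correlation matrix with nonnegative entries, unit diagonal and
constant row sums `K/N_p`), for target LS error `e` with `N_p(1+e) > K`, the powers
`q_k` solve the equal-error fixed-point equations iff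
`q_k = σ²/((N_p(1+e) − K) β_k)` for every `k` (i.e. `μ_k = β_k q_k` is constant). -/
theorem wbe_ls_optimal_powers (K Np : ℕ) (hNp : 0 < Np) (hK : Np ≤ K)
    (Φ : Matrix (Fin K) (Fin K) ℝ) (hnn : ∀ i j, 0 ≤ Φ i j)
    (hdiag : ∀ k, Φ k k = 1) (hrow : ∀ k, ∑ j, Φ k j = (K : ℝ) / Np)
    (σ2 : ℝ) (hσ : 0 < σ2) (e : ℝ) (he : (K : ℝ) < Np * (1 + e))
    (β q : Fin K → ℝ) (hβ : ∀ k, 0 < β k) :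
    (∀ k, ∑ j ∈ univ.erase k, Φ k j * (β j * q j) + σ2 / Np = e * (β k * q k)) ↔
      ∀ k, q k = σ2 / (((Np : ℝ) * (1 + e) - K) * β k) :=
  wbe_ls_optimal_powers_general K Np hNp Φ hnn hdiag hrow σ2 e he β q hβ
end

section
/- For the FFT-based pilots φ_k with entries (1/√N_p) e^{2πi·u_j(k−1)/K} (distinct u_j), for each fixed k one has Σ_{k'=1}^{K} |⟨φ_k, φ_{k'}⟩|² = K/N_p. -/
/-!
Put the pilots as the columns of the `N_p × K` matrix `Φ`, with entries `ψ(u_i k) / √N_p` for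
the standard additive character `ψ` of `ZMod K`. Orthogonality of characters, together with the
`u_i` being distinct mod `K`, says that the rows of `Φ` are orthogonal of squared norm `K / N_p`,
i.e. `Φ Φᴴ = (K / N_p) I`: the pilots form a tight frame. Hence
`∑ k', |⟨x, φ_k'⟩|² = ‖Φᴴ x‖² = (K / N_p) ‖x‖²` for every `x`, and `φ_k` is a unit vector.
-/

/-- FFT-based pilot sequence: `N_p` distinct rows of the `K×K` DFT matrix, normalized
by `1/√N_p`. The `i`-th entry of `φ_k` is `(1/√N_p) e^{2πi·u_i·k/K}`. -/
noncomputable def fftPilot (K Np : ℕ) (u : Fin Np → Fin K) (k : Fin K) :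
    EuclideanSpace ℂ (Fin Np) :=
  WithLp.toLp 2 (fun i => ((1 / Real.sqrt Np : ℝ) : ℂ) *
    Complex.exp (2 * Real.pi * Complex.I * ((u i : ℕ) : ℂ) * ((k : ℕ) : ℂ) / (K : ℂ)))

open Finset ComplexConjugate ZMod

theorem EuclideanSpace.sum_norm_inner_sq_eq_of_rows_orthogonal {𝕜 ι κ : Type*} [RCLike 𝕜]
    [Fintype ι] [DecidableEq ι] [Fintype κ] (φ : κ → EuclideanSpace 𝕜 ι) (c : ℝ)
    (hφ : ∀ i j, ∑ k, φ k i * conj (φ k j) = if i = j then (c : 𝕜) else 0)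
    (x : EuclideanSpace 𝕜 ι) :
    ∑ k, ‖inner 𝕜 x (φ k)‖ ^ 2 = c * ‖x‖ ^ 2 := by
  apply RCLike.ofReal_injective (K := 𝕜)
  push_cast
  calc ∑ k, (‖inner 𝕜 x (φ k)‖ : 𝕜) ^ 2
      = ∑ k, inner 𝕜 x (φ k) * conj (inner 𝕜 x (φ k)) := by simp only [RCLike.mul_conj]
    _ = ∑ k, ∑ i, ∑ j, conj (x i) * x j * (φ k i * conj (φ k j)) := by
      simp only [PiLp.inner_apply, RCLike.inner_apply', map_sum, map_mul, RCLike.conj_conj,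
        sum_mul_sum]
      exact sum_congr rfl fun k _ => sum_congr rfl fun i _ => sum_congr rfl fun j _ => by ring
    _ = ∑ i, ∑ j, conj (x i) * x j * ∑ k, φ k i * conj (φ k j) := by
      simp only [mul_sum]
      rw [sum_comm]
      exact sum_congr rfl fun i _ => sum_comm
    _ = c * ∑ i, conj (x i) * x i := by
      simp only [hφ, mul_ite, mul_zero, sum_ite_eq, mem_univ, if_true, mul_sum]
      exact sum_congr rfl fun i _ => by ring
    _ = c * (‖x‖ : 𝕜) ^ 2 := by
      rw [← inner_self_eq_norm_sq_to_K, PiLp.inner_apply]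
      simp only [RCLike.inner_apply']

namespace ZMod

lemma injective_natCast_finVal (K : ℕ) [NeZero K] :
    Function.Injective fun k : Fin K => ((k : ℕ) : ZMod K) := fun a b h => Fin.ext <| by
  simpa only [val_natCast_of_lt a.isLt, val_natCast_of_lt b.isLt] using congrArg ZMod.val h

lemma sum_fin_stdAddChar_mul (K : ℕ) [NeZero K] (b : ZMod K) :
    ∑ k : Fin K, stdAddChar (((k : ℕ) : ZMod K) * b) = if b = 0 then (K : ℂ) else 0 := by
  have hbij := (Fintype.bijective_iff_injective_and_card _).mpr
    ⟨injective_natCast_finVal K, by simp [ZMod.card]⟩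
  calc ∑ k : Fin K, stdAddChar (((k : ℕ) : ZMod K) * b)
      = ∑ x : ZMod K, stdAddChar (x * b) := Fintype.sum_bijective _ hbij _ _ fun _ => rfl
    _ = _ := by simp [AddChar.sum_mulShift b (isPrimitive_stdAddChar K), ZMod.card]

lemma stdAddChar_mul_conj {K : ℕ} [NeZero K] (a b : ZMod K) :
    stdAddChar a * conj (stdAddChar b) = stdAddChar (a - b) := by
  rw [AddChar.starComp_apply (by simp [ringChar_zmod_n, Nat.pos_of_neZero]),
    AddChar.inv_apply, sub_eq_add_neg, AddChar.map_add_eq_mul]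

end ZMod

lemma fftPilot_apply (K Np : ℕ) [NeZero K] (u : Fin Np → Fin K) (k : Fin K) (i : Fin Np) :
    fftPilot K Np u k i =
      ((1 / Real.sqrt Np : ℝ) : ℂ) * stdAddChar (((u i : ℕ) : ZMod K) * ((k : ℕ) : ZMod K)) := by
  have h := stdAddChar_coe (N := K) ((u i : ℕ) * (k : ℕ) : ℤ)
  push_cast at h
  rw [h, fftPilot, PiLp.toLp_apply, mul_assoc]

lemma fftPilot_sum_mul_conj {K Np : ℕ} [NeZero K] {u : Fin Np → Fin K}
    (hu : Function.Injective u) (i j : Fin Np) :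
    ∑ k, fftPilot K Np u k i * conj (fftPilot K Np u k j) =
      if i = j then (((K : ℝ) / Np : ℝ) : ℂ) else 0 := by
  have hscale : ((1 / √Np : ℝ) : ℂ) * conj ((1 / √Np : ℝ) : ℂ) = ((1 / Np : ℝ) : ℂ) := by
    rw [Complex.conj_ofReal, ← Complex.ofReal_mul, div_mul_div_comm,
      Real.mul_self_sqrt (Nat.cast_nonneg Np), one_mul]
  simp_rw [fftPilot_apply, map_mul, mul_mul_mul_comm, hscale, stdAddChar_mul_conj, ← sub_mul,
    mul_comm _ ((_ : ℕ) : ZMod K)]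
  rw [← mul_sum, sum_fin_stdAddChar_mul]
  simp only [sub_eq_zero, (injective_natCast_finVal K).eq_iff, hu.eq_iff]
  split_ifs <;> push_cast <;> ring

lemma norm_fftPilot {K Np : ℕ} [NeZero K] (hNp : 0 < Np) (u : Fin Np → Fin K) (k : Fin K) :
    ‖fftPilot K Np u k‖ = 1 := by
  refine (pow_eq_one_iff_of_nonneg (norm_nonneg _) two_ne_zero).1 ?_
  rw [EuclideanSpace.norm_sq_eq]
  simp [fftPilot_apply, hNp.ne']

/-- Constant row-sum (tight frame) property of the FFT-based pilots: for every `k`,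
`Σ_{k'} |⟨φ_k, φ_{k'}⟩|² = K/N_p`. -/
theorem fftPilot_rowsum (K Np : ℕ) (hNp : 0 < Np) (hK : 0 < K)
    (u : Fin Np → Fin K) (hu : Function.Injective u) (k : Fin K) :
    ∑ k', ‖(inner ℂ (fftPilot K Np u k) (fftPilot K Np u k') : ℂ)‖ ^ 2 =
      (K : ℝ) / (Np : ℝ) := by
  have : NeZero K := ⟨hK.ne'⟩
  rw [EuclideanSpace.sum_norm_inner_sq_eq_of_rows_orthogonal _ ((K : ℝ) / Np)
    (fftPilot_sum_mul_conj hu), norm_fftPilot hNp, one_pow, mul_one]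
end

section
/- Suppose positive reals μ_1,...,μ_K satisfy the equal-LS-error equations Σ_{j≠k} Φ̄_{kj} μ_j + σ²/N_p = e μ_k for all k, where Φ̄ is the correlation matrix (Φ̄_{kk}=1). If the errors were unequal with e_1 < e_2 = ... = e_K, then decreasing μ_1 strictly decreases e_j for all j ≥ 2 while the system remains feasible; hence the min-max error is attained with all per-user errors equal. -/
/-!
Lowering `μ 0` only removes interference from the numerators of the other users, so each
`e_j`, `j ≠ 0`, drops by exactly `Φ j 0 * (μ 0 - μ' 0) / μ j > 0`. User `0`'s own error scales
as `e_0 * μ 0 / μ' 0`, which is continuous in `μ' 0`; since `e_0` is strictly below the common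
error of the others, it stays below it for `μ' 0` slightly smaller than `μ 0`.
-/

open Finset

/-- Per-user LS channel estimation error
`e_k(μ) = (N_p Σ_{j≠k} Φ̄_{kj} μ_j + σ²)/(N_p μ_k)`. -/
noncomputable def lsErr (Np : ℕ) (σ2 : ℝ) {K : ℕ} (Φ : Matrix (Fin K) (Fin K) ℝ)
    (μ : Fin K → ℝ) (k : Fin K) : ℝ :=
  ((Np : ℝ) * ∑ j ∈ univ.erase k, Φ k j * μ j + σ2) / ((Np : ℝ) * μ k)

open Filter Topology Function

theorem Finset.sum_mul_update_of_mem {ι R : Type*} [DecidableEq ι] [CommRing R] {s : Finset ι}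
    {i : ι} (hi : i ∈ s) (c μ : ι → R) (m : R) :
    ∑ l ∈ s, c l * update μ i m l = ∑ l ∈ s, c l * μ l + c i * (m - μ i) := by
  rw [← add_sum_erase s _ hi, ← add_sum_erase s _ hi, update_self,
    sum_congr rfl fun l hl => by rw [update_of_ne (ne_of_mem_erase hl)]]
  ring

section
variable {Np : ℕ} {σ2 : ℝ} {n : ℕ} {Φ : Matrix (Fin n) (Fin n) ℝ} {μ : Fin n → ℝ}

theorem lsErr_update_self {k : Fin n} (hμ : μ k ≠ 0) (m : ℝ) :
    lsErr Np σ2 Φ (update μ k m) k = lsErr Np σ2 Φ μ k * μ k / m := by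
  have hsum :
      ∑ j ∈ univ.erase k, Φ k j * update μ k m j = ∑ j ∈ univ.erase k, Φ k j * μ j :=
    sum_congr rfl fun j hj => by rw [update_of_ne (ne_of_mem_erase hj)]
  simp only [lsErr, hsum, update_self]
  rw [div_mul_eq_mul_div, mul_div_assoc, div_mul_cancel_right₀ hμ]
  ring

theorem lsErr_update_of_ne (hNp : Np ≠ 0) {i j : Fin n} (hji : j ≠ i) (m : ℝ) :
    lsErr Np σ2 Φ (update μ i m) j = lsErr Np σ2 Φ μ j + Φ j i * (m - μ i) / μ j := by
  simp only [lsErr, sum_mul_update_of_mem (mem_erase.2 ⟨hji.symm, mem_univ i⟩),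
    update_of_ne hji]
  rw [mul_add, add_right_comm, add_div,
    mul_div_mul_left _ _ (Nat.cast_ne_zero.2 hNp)]

theorem lsErr_update_lt_of_ne (hNp : Np ≠ 0) {i j : Fin n} (hji : j ≠ i) (hΦ : 0 < Φ j i)
    (hμ : 0 < μ j) {m : ℝ} (hm : m < μ i) :
    lsErr Np σ2 Φ (update μ i m) j < lsErr Np σ2 Φ μ j := by
  rw [lsErr_update_of_ne hNp hji, add_lt_iff_neg_left]
  exact div_neg_of_neg_of_pos (mul_neg_of_pos_of_neg hΦ (sub_neg.2 hm)) hμ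

theorem exists_lsErr_update_self_lt {k : Fin n} (hμ : 0 < μ k) {e : ℝ}
    (he : lsErr Np σ2 Φ μ k < e) :
    ∃ m, 0 < m ∧ m < μ k ∧ lsErr Np σ2 Φ (update μ k m) k < e := by
  have hcont : Tendsto (fun m => lsErr Np σ2 Φ μ k * μ k / m) (𝓝[<] μ k)
      (𝓝 (lsErr Np σ2 Φ μ k * μ k / μ k)) :=
    (continuousAt_const.div continuousAt_id hμ.ne').tendsto.mono_left nhdsWithin_le_nhds
  rw [mul_div_cancel_right₀ _ hμ.ne'] at hcont
  have hIoo : ∀ᶠ m in 𝓝[<] μ k, m ∈ Set.Ioo 0 (μ k) := Ioo_mem_nhdsLT hμ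
  obtain ⟨m, ⟨hpos, hlt⟩, hm⟩ := (hIoo.and (hcont.eventually_lt_const he)).exists
  exact ⟨m, hpos, hlt, by rwa [lsErr_update_self hμ.ne']⟩
end

theorem ls_minmax_equalizes_general (K Np : ℕ) (hNp : 0 < Np) (σ2 : ℝ)
    (Φ : Matrix (Fin (K + 2)) (Fin (K + 2)) ℝ)
    (hcol : ∀ j, j ≠ 0 → 0 < Φ j 0)
    (μ : Fin (K + 2) → ℝ) (hμ : ∀ k, 0 < μ k)
    (hlt : lsErr Np σ2 Φ μ 0 < lsErr Np σ2 Φ μ 1)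
    (heq : ∀ j j', j ≠ 0 → j' ≠ 0 → lsErr Np σ2 Φ μ j = lsErr Np σ2 Φ μ j') :
    ∃ μ' : Fin (K + 2) → ℝ, (∀ k, 0 < μ' k) ∧ μ' 0 < μ 0 ∧
      (∀ k, k ≠ 0 → μ' k = μ k) ∧
      (∀ j, j ≠ 0 → lsErr Np σ2 Φ μ' j < lsErr Np σ2 Φ μ j) ∧
      (∀ j, lsErr Np σ2 Φ μ' j < lsErr Np σ2 Φ μ 1) := by
  obtain ⟨m, hm_pos, hm_lt, hm_err⟩ := exists_lsErr_update_self_lt (hμ 0) hlt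
  have hdec : ∀ j, j ≠ 0 → lsErr Np σ2 Φ (update μ 0 m) j < lsErr Np σ2 Φ μ j :=
    fun j hj => lsErr_update_lt_of_ne hNp.ne' hj (hcol j hj) (hμ j) hm_lt
  refine ⟨update μ 0 m, (forall_update_iff μ fun _ x => 0 < x).2 ⟨hm_pos, fun k _ => hμ k⟩,
    by rwa [update_self], fun k hk => update_of_ne hk m μ, hdec, fun j => ?_⟩
  obtain rfl | hj := eq_or_ne j 0
  · exact hm_err
  · exact (hdec j hj).trans_eq (heq j 1 hj one_ne_zero)

/-- If the per-user LS errors are unequal, with user `0` strictly below the common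
error of all the other users, then the power `μ_0` of user `0` can be strictly
decreased so that the system stays feasible (all powers positive), every other user's
error strictly decreases, and every error stays strictly below the former maximum:
hence the min-max error is attained only with all per-user errors equal. -/
theorem ls_minmax_equalizes (K Np : ℕ) (hNp : 0 < Np) (σ2 : ℝ) (hσ : 0 < σ2)
    (Φ : Matrix (Fin (K + 2)) (Fin (K + 2)) ℝ) (hnn : ∀ i j, 0 ≤ Φ i j)
    (hdiag : ∀ k, Φ k k = 1) (hcol : ∀ j, j ≠ 0 → 0 < Φ j 0)
    (μ : Fin (K + 2) → ℝ) (hμ : ∀ k, 0 < μ k)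
    (hlt : lsErr Np σ2 Φ μ 0 < lsErr Np σ2 Φ μ 1)
    (heq : ∀ j j', j ≠ 0 → j' ≠ 0 → lsErr Np σ2 Φ μ j = lsErr Np σ2 Φ μ j') :
    ∃ μ' : Fin (K + 2) → ℝ, (∀ k, 0 < μ' k) ∧ μ' 0 < μ 0 ∧
      (∀ k, k ≠ 0 → μ' k = μ k) ∧
      (∀ j, j ≠ 0 → lsErr Np σ2 Φ μ' j < lsErr Np σ2 Φ μ j) ∧
      (∀ j, lsErr Np σ2 Φ μ' j < lsErr Np σ2 Φ μ 1) :=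
  ls_minmax_equalizes_general K Np hNp σ2 Φ hcol μ hμ hlt heq
end
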